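/- arXiv:0810.1011 — 6 statements merged into one kernel-verified Lean document; each statement's English description precedes it below -/
import Mathlib

section
/- Generalized Cauchy–Binet (Andréief) identity: for a measure space (E, B, m) and measurable functions φ_i, ψ_j (1 ≤ i,j ≤ n) such that each product φ_i ψ_j is integrable, det(∫_E φ_i(x) ψ_j(x) dm(x))_{n×n} = (1/n!) ∫_{E^n} det(φ_i(x_j))_{n×n} det(ψ_i(x_j))_{n×n} ∏_{k=1}^n dm(x_k). -/
/-!
Expanding both determinants by the Leibniz formula writes the integrand as a signed double sum
over permutations `σ, τ` of products `∏ⱼ φ_{σ j}(x_j) ψ_{τ j}(x_j)`, each of which integrates by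
Fubini to `∏ⱼ A_{σ j, τ j}` with `A = (∫ φᵢ ψⱼ dm)`. For fixed `σ` the sum over `τ` is
`sign σ · det (rows of A permuted by σ) = det A`, so the double sum is `n! · det A`.
-/

open MeasureTheory Equiv

namespace Matrix

variable {ι R : Type*} [Fintype ι] [DecidableEq ι] [CommRing R]

theorem det_mul_det_eq_sum_sum_perm (M N : Matrix ι ι R) :
    M.det * N.det = ∑ σ : Perm ι, ∑ τ : Perm ι,
      (Perm.sign σ : R) * (Perm.sign τ : R) * ∏ j, M (σ j) j * N (τ j) j := by
  rw [det_apply', det_apply', Finset.sum_mul_sum]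
  refine Finset.sum_congr rfl fun σ _ => Finset.sum_congr rfl fun τ _ => ?_
  rw [Finset.prod_mul_distrib]
  ring

theorem sum_perm_sign_mul_prod_apply_perm (A : Matrix ι ι R) (σ : Perm ι) :
    ∑ τ : Perm ι, (Perm.sign τ : R) * ∏ j, A (σ j) (τ j) = Perm.sign σ * A.det := by
  rw [← det_permute, ← det_transpose, det_apply']
  rfl

theorem sum_perm_sum_perm_sign_mul_prod_apply (A : Matrix ι ι R) :
    ∑ σ : Perm ι, ∑ τ : Perm ι, (Perm.sign σ : R) * (Perm.sign τ : R) * ∏ j, A (σ j) (τ j)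
      = (Fintype.card ι).factorial * A.det := by
  have sign_mul_self (σ : Perm ι) : (Perm.sign σ : R) * Perm.sign σ = 1 := by
    rw [← Int.cast_mul, ← Units.val_mul, Int.units_mul_self, Units.val_one, Int.cast_one]
  calc _ = ∑ σ : Perm ι, (Perm.sign σ : R) * ∑ τ : Perm ι,
          (Perm.sign τ : R) * ∏ j, A (σ j) (τ j) := by
        simp only [mul_assoc, Finset.mul_sum]
    _ = ∑ _σ : Perm ι, A.det := Finset.sum_congr rfl fun σ _ => by
        rw [sum_perm_sign_mul_prod_apply_perm, ← mul_assoc, sign_mul_self, one_mul]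
    _ = _ := by simp only [Finset.sum_const, Finset.card_univ, Fintype.card_perm, nsmul_eq_mul]

end Matrix

theorem MeasureTheory.integral_det_mul_det {E ι 𝕜 : Type*} [Fintype ι] [DecidableEq ι]
    [RCLike 𝕜] [MeasurableSpace E] (m : Measure E) [SigmaFinite m] (φ ψ : ι → E → 𝕜)
    (hint : ∀ i j, Integrable (fun x => φ i x * ψ j x) m) :
    ∫ x : ι → E, (Matrix.of fun i j => φ i (x j)).det * (Matrix.of fun i j => ψ i (x j)).det
        ∂(Measure.pi fun _ => m)
      = (Fintype.card ι).factorial * (Matrix.of fun i j => ∫ x, φ i x * ψ j x ∂m).det := by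
  have hprod (σ τ : Perm ι) :
      Integrable (fun x : ι → E => ∏ j, φ (σ j) (x j) * ψ (τ j) (x j))
        (Measure.pi fun _ => m) :=
    Integrable.fintype_prod (f := fun j y => φ (σ j) y * ψ (τ j) y) fun j => hint _ _
  simp_rw [Matrix.det_mul_det_eq_sum_sum_perm, Matrix.of_apply]
  rw [integral_finsetSum _ fun σ _ => integrable_finsetSum _ fun τ _ => (hprod σ τ).const_mul _,
    ← Matrix.sum_perm_sum_perm_sign_mul_prod_apply]
  refine Finset.sum_congr rfl fun σ _ => ?_
  rw [integral_finsetSum _ fun τ _ => (hprod σ τ).const_mul _]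
  refine Finset.sum_congr rfl fun τ _ => ?_
  rw [integral_const_mul, integral_fintype_prod_eq_prod (fun j y => φ (σ j) y * ψ (τ j) y)]
  rfl

theorem stmt1_general {E : Type*} [MeasurableSpace E] (m : Measure E) [SigmaFinite m] (n : ℕ)
    (φ ψ : Fin n → E → ℝ)
    (hint : ∀ i j, Integrable (fun x => φ i x * ψ j x) m) :
    Matrix.det (Matrix.of fun i j : Fin n => ∫ x, φ i x * ψ j x ∂m)
      = (1 / (Nat.factorial n) : ℝ) *
        ∫ x : Fin n → E,
          (Matrix.det (Matrix.of fun i j : Fin n => φ i (x j)))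
            * Matrix.det (Matrix.of fun i j : Fin n => ψ i (x j))
          ∂(Measure.pi fun _ : Fin n => m) := by
  rw [integral_det_mul_det m φ ψ hint, Fintype.card_fin, ← mul_assoc,
    one_div_mul_cancel (by positivity), one_mul]

/-- generalized Cauchy–Binet (Andréief) identity. -/
theorem stmt1 {E : Type*} [MeasurableSpace E] (m : Measure E) [SigmaFinite m] (n : ℕ)
    (φ ψ : Fin n → E → ℝ)
    (hφ : ∀ i, Measurable (φ i)) (hψ : ∀ j, Measurable (ψ j))
    (hint : ∀ i j, Integrable (fun x => φ i x * ψ j x) m) :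
    Matrix.det (Matrix.of fun i j : Fin n => ∫ x, φ i x * ψ j x ∂m)
      = (1 / (Nat.factorial n) : ℝ) *
        ∫ x : Fin n → E,
          (Matrix.det (Matrix.of fun i j : Fin n => φ i (x j)))
            * Matrix.det (Matrix.of fun i j : Fin n => ψ i (x j))
          ∂(Measure.pi fun _ : Fin n => m) :=
  stmt1_general m n φ ψ hint
end

section
/- The number of integer points in the type-A Gelfand–Tsetlin polytope GT_n(λ), for λ ∈ Z^n with λ_1 ≥ ... ≥ λ_n, equals the Weyl dimension formula ∏_{1≤i<j≤n} (λ_i − λ_j + j − i)/(j − i). -/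
/-!
Deleting the top row of a Gelfand–Tsetlin pattern with top row `λ` leaves a pattern whose top
row `μ` interlaces `λ`, so the number of patterns satisfies the branching recursion
`#GT(λ) = ∑_{μ ≺ λ} #GT(μ)`. The Weyl product satisfies the same recursion. Write it as
`V(λ - ρ) / V(-ρ)` with `ρ = (0, 1, …, n - 1)` and `V` the Vandermonde determinant, and use
the falling factorials as polynomial basis for `V`: the determinant is multilinear in the rows,
summing a falling factorial over an interval telescopes to the next one, and subtracting
adjacent rows of the falling-factorial matrix of `l + 1` produces exactly these telescoped rows.
This gives `n! ∑_{l_{i+1} < m_i ≤ l_i} V(m) = (-1)^n V(l)`, and with `l = λ - ρ` the recursion.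
-/

/-- An integer Gelfand–Tsetlin pattern of size `n`, encoded as a function on
`Fin n × Fin n`: `x (k, j)` is the `(j+1)`-st entry of the row of length `k+1`;
entries with `j > k` are padded by `0`, and consecutive rows interlace. -/
def IsGTPatternZ (n : ℕ) (x : Fin n × Fin n → ℤ) : Prop :=
  (∀ k j : Fin n, (k : ℕ) < (j : ℕ) → x (k, j) = 0) ∧
  (∀ k j : Fin n, ∀ hk : (k : ℕ) + 1 < n, ∀ hj : (j : ℕ) ≤ (k : ℕ),
    x (k, j) ≤ x (⟨(k : ℕ) + 1, hk⟩, j) ∧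
    x (⟨(k : ℕ) + 1, hk⟩, ⟨(j : ℕ) + 1, by omega⟩) ≤ x (k, j))

open Finset Polynomial Matrix Nat

noncomputable def interlacingRows {N : ℕ} (lam : Fin (N + 1) → ℤ) : Finset (Fin N → ℤ) :=
  Fintype.piFinset fun i => Icc (lam i.succ) (lam i.castSucc)

lemma isGTPatternZ_succ_iff {N : ℕ} (x : Fin (N + 1) × Fin (N + 1) → ℤ) :
    IsGTPatternZ (N + 1) x ↔ (∀ k j : Fin (N + 1), k < j → x (k, j) = 0) ∧
      ∀ k j : Fin N, j ≤ k →
        x (k.castSucc, j.castSucc) ≤ x (k.succ, j.castSucc) ∧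
        x (k.succ, j.succ) ≤ x (k.castSucc, j.castSucc) :=
  and_congr Iff.rfl
    ⟨fun h k j hjk => h k.castSucc j.castSucc (by simp) hjk,
     fun h k j hk hjk => h ⟨k, by omega⟩ ⟨j, by omega⟩ hjk⟩

abbrev GTPattern (n : ℕ) (lam : Fin n → ℤ) : Type :=
  {x : Fin n × Fin n → ℤ //
    IsGTPatternZ n x ∧ ∀ k j : Fin n, (k : ℕ) = n - 1 → x (k, j) = lam j}

section Branching

variable {N : ℕ} (lam : Fin (N + 1) → ℤ)

def restrictPattern (x : Fin (N + 1) × Fin (N + 1) → ℤ) : Fin N × Fin N → ℤ :=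
  fun p => x (p.1.castSucc, p.2.castSucc)

def penultimateRow (x : Fin (N + 1) × Fin (N + 1) → ℤ) (j : Fin N) : ℤ :=
  x (⟨N - 1, by omega⟩, j.castSucc)

def extendPattern (y : Fin N × Fin N → ℤ) : Fin (N + 1) × Fin (N + 1) → ℤ := fun p =>
  if hk : p.1 = Fin.last N then lam p.2
  else if hj : p.2 = Fin.last N then 0
  else y (p.1.castPred hk, p.2.castPred hj)

lemma gtPattern_last (x : GTPattern (N + 1) lam) (j : Fin (N + 1)) :
    x.1 (Fin.last N, j) = lam j :=
  x.2.2 _ j (by simp)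

@[simp]
lemma extendPattern_last (y : Fin N × Fin N → ℤ) (j : Fin (N + 1)) :
    extendPattern lam y (Fin.last N, j) = lam j := by
  simp [extendPattern]

@[simp]
lemma extendPattern_castSucc_last (y : Fin N × Fin N → ℤ) (k : Fin N) :
    extendPattern lam y (k.castSucc, Fin.last N) = 0 := by
  simp [extendPattern, Fin.castSucc_ne_last]

@[simp]
lemma extendPattern_castSucc_castSucc (y : Fin N × Fin N → ℤ) (k j : Fin N) :
    extendPattern lam y (k.castSucc, j.castSucc) = y (k, j) := by
  simp [extendPattern, Fin.castSucc_ne_last]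

@[simp]
lemma restrictPattern_extendPattern (y : Fin N × Fin N → ℤ) :
    restrictPattern (extendPattern lam y) = y := by
  ext p
  simp [restrictPattern]

lemma extendPattern_restrictPattern (x : GTPattern (N + 1) lam) :
    extendPattern lam (restrictPattern x.1) = x.1 := by
  ext ⟨k, j⟩
  induction k using Fin.lastCases with
  | last => simp [gtPattern_last]
  | cast k =>
    induction j using Fin.lastCases with
    | last => simp [x.2.1.1 k.castSucc (Fin.last N) (by simp)]
    | cast j => simp [restrictPattern]

lemma penultimateRow_mem_interlacingRows (x : GTPattern (N + 1) lam) :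
    penultimateRow x.1 ∈ interlacingRows lam := by
  rw [interlacingRows, Fintype.mem_piFinset]
  intro j
  have := j.isLt
  let k : Fin N := ⟨N - 1, by omega⟩
  have hk : k.succ = Fin.last N := Fin.ext (by simp only [k, Fin.val_succ, Fin.val_last]; omega)
  have h := ((isGTPatternZ_succ_iff x.1).1 x.2.1).2 k j (Nat.le_sub_one_of_lt j.isLt)
  rw [hk, gtPattern_last, gtPattern_last] at h
  exact mem_Icc.2 ⟨h.2, h.1⟩

lemma restrictPattern_mem (x : GTPattern (N + 1) lam) :
    IsGTPatternZ N (restrictPattern x.1) ∧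
      ∀ k j : Fin N, (k : ℕ) = N - 1 → restrictPattern x.1 (k, j) = penultimateRow x.1 j :=
  ⟨⟨fun k j hkj => x.2.1.1 k.castSucc j.castSucc hkj,
    fun k j hk hjk => x.2.1.2 k.castSucc j.castSucc (by simp) hjk⟩,
   fun k j hk => congrArg (fun i => x.1 (i, j.castSucc)) (Fin.ext hk)⟩

variable {lam} in
lemma extendPattern_mem {μ : Fin N → ℤ} (hμ : μ ∈ interlacingRows lam)
    (y : GTPattern N μ) :
    IsGTPatternZ (N + 1) (extendPattern lam y.1) ∧
      ∀ k j : Fin (N + 1), (k : ℕ) = N + 1 - 1 → extendPattern lam y.1 (k, j) = lam j := by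
  rw [interlacingRows, Fintype.mem_piFinset] at hμ
  refine ⟨(isGTPatternZ_succ_iff _).2 ⟨?_, ?_⟩, fun k j hk => ?_⟩
  · intro k j hkj
    induction k using Fin.lastCases with
    | last => exact absurd hkj (not_lt.2 (Fin.le_last j))
    | cast k =>
      induction j using Fin.lastCases with
      | last => simp
      | cast j => simpa using y.2.1.1 k j (by simpa using hkj)
  · intro k j hjk
    by_cases hk : (k : ℕ) + 1 < N
    · have hy := y.2.1.2 k j hk hjk
      rw [show k.succ = (⟨k + 1, hk⟩ : Fin N).castSucc from rfl,
        show j.succ = (⟨j + 1, by omega⟩ : Fin N).castSucc from rfl]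
      simp only [extendPattern_castSucc_castSucc]
      exact hy
    · have hkN : k.succ = Fin.last N :=
        Fin.ext (by simp only [Fin.val_succ, Fin.val_last]; omega)
      rw [hkN, extendPattern_last, extendPattern_last, extendPattern_castSucc_castSucc,
        y.2.2 k j (by omega)]
      exact ⟨(mem_Icc.1 (hμ j)).2, (mem_Icc.1 (hμ j)).1⟩
  · obtain rfl : k = Fin.last N := Fin.ext (by simpa using hk)
    simp

lemma penultimateRow_extendPattern {μ : Fin N → ℤ} (y : GTPattern N μ) :
    penultimateRow (extendPattern lam y.1) = μ := by
  ext j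
  have := j.isLt
  exact (extendPattern_castSucc_castSucc lam y.1 ⟨N - 1, by omega⟩ j).trans (y.2.2 _ j rfl)

noncomputable def toInterlacingRow (x : GTPattern (N + 1) lam) : interlacingRows lam :=
  ⟨penultimateRow x.1, penultimateRow_mem_interlacingRows lam x⟩

noncomputable def fiberEquivGTPattern (μ : interlacingRows lam) :
    {x : GTPattern (N + 1) lam // toInterlacingRow lam x = μ} ≃ GTPattern N μ where
  toFun x := ⟨restrictPattern x.1.1, by
    simpa [← x.2, toInterlacingRow] using restrictPattern_mem lam x.1⟩
  invFun y := ⟨⟨extendPattern lam y.1, extendPattern_mem μ.2 y⟩,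
    Subtype.ext (penultimateRow_extendPattern lam y)⟩
  left_inv x := Subtype.ext (Subtype.ext (extendPattern_restrictPattern lam x.1))
  right_inv y := Subtype.ext (restrictPattern_extendPattern lam y.1)

end Branching

lemma finite_gtPattern (n : ℕ) (lam : Fin n → ℤ) : Finite (GTPattern n lam) := by
  induction n with
  | zero => exact Finite.of_subsingleton
  | succ N ih =>
    have := fun μ => Finite.of_equiv _ (fiberEquivGTPattern lam μ).symm
    exact Finite.of_equiv _ (Equiv.sigmaFiberEquiv (toInterlacingRow lam))

lemma card_gtPattern_succ {N : ℕ} (lam : Fin (N + 1) → ℤ) :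
    Nat.card (GTPattern (N + 1) lam)
      = ∑ μ ∈ interlacingRows lam, Nat.card (GTPattern N μ) := by
  have := finite_gtPattern N
  have := fun μ => Finite.of_equiv _ (fiberEquivGTPattern lam μ).symm
  rw [← Nat.card_congr (Equiv.sigmaFiberEquiv (toInterlacingRow lam)), Nat.card_sigma,
    ← sum_coe_sort (interlacingRows lam)]
  exact sum_congr rfl fun μ _ => Nat.card_congr (fiberEquivGTPattern lam μ)

lemma card_gtPattern_zero (lam : Fin 0 → ℤ) : Nat.card (GTPattern 0 lam) = 1 :=
  Nat.card_eq_one_iff_unique.2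
    ⟨inferInstance,
      ⟨⟨fun _ => 0, ⟨fun k => k.elim0, fun k => k.elim0⟩, fun k => k.elim0⟩⟩⟩

lemma antitone_of_mem_interlacingRows {N : ℕ} {lam : Fin (N + 1) → ℤ} {μ : Fin N → ℤ}
    (hμ : μ ∈ interlacingRows lam) : Antitone μ := by
  rw [interlacingRows, Fintype.mem_piFinset] at hμ
  cases N with
  | zero => exact fun a => a.elim0
  | succ M =>
    refine Fin.antitone_iff_succ_le.2 fun i => ?_
    calc μ i.succ ≤ lam i.succ.castSucc := (mem_Icc.1 (hμ i.succ)).2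
      _ = lam i.castSucc.succ := rfl
      _ ≤ μ i.castSucc := (mem_Icc.1 (hμ i.castSucc)).1

section Algebra

variable {R : Type*} [CommRing R]

lemma descPochhammer_eval_add_one_sub (j : ℕ) (x : R) :
    (descPochhammer R (j + 1)).eval (x + 1) - (descPochhammer R (j + 1)).eval x
      = (j + 1) * (descPochhammer R j).eval x := by
  have h : (descPochhammer R (j + 1)).eval (x + 1) = (x + 1) * (descPochhammer R j).eval x := by
    simp [descPochhammer_succ_left]
  rw [h, descPochhammer_succ_eval]
  ring

lemma mul_sum_Ioc_descPochhammer_eval (j : ℕ) {a b : ℤ} (hab : a ≤ b) :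
    (j + 1) * ∑ m ∈ Ioc a b, (descPochhammer R j).eval (m : R)
      = (descPochhammer R (j + 1)).eval ((b : R) + 1)
        - (descPochhammer R (j + 1)).eval ((a : R) + 1) := by
  induction b, hab using Int.leInduction with
  | base => simp
  | succ b hab ih =>
    rw [← insert_Ioc_right_eq_Ioc_add_one hab, sum_insert (by simp), mul_add, ih,
      ← descPochhammer_eval_add_one_sub]
    push_cast
    ring

lemma det_of_sum_rows {n ι : Type*} [Fintype n] [DecidableEq n] [DecidableEq ι]
    (s : n → Finset ι) (g : n → ι → n → R) :
    (of fun i j => ∑ a ∈ s i, g i a j).det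
      = ∑ m ∈ Fintype.piFinset s, (of fun i j => g i (m i) j).det := by
  have := (detRowAlternating (R := R) (n := n)).toMultilinearMap.map_sum_finset g s
  convert this using 2
  · simp only [← Finset.sum_apply]
    rfl
  · rfl

lemma det_eq_det_succ_sub_castSucc {n : ℕ} (A : Matrix (Fin (n + 1)) (Fin (n + 1)) R)
    (hA : ∀ i, A i 0 = 1) :
    A.det = (of fun i j : Fin n => A i.succ j.succ - A i.castSucc j.succ).det := by
  let B : Matrix (Fin (n + 1)) (Fin (n + 1)) R :=
    of fun i j => Fin.cases (A 0 j) (fun i => A i.succ j - A i.castSucc j) i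
  have hAB : A.det = B.det :=
    det_eq_of_forall_row_eq_smul_add_pred (fun _ => 1) (fun _ => rfl) (fun i j => by simp [B])
  rw [hAB, det_succ_column_zero, Fin.sum_univ_succ, sum_eq_zero fun i _ => by simp [B, hA],
    add_zero, Fin.succAbove_zero, Fin.val_zero, pow_zero, one_mul, show B 0 0 = 1 from hA 0,
    one_mul]
  rfl

lemma det_vandermonde_eq_det_descPochhammer [IsDomain R] {n : ℕ} (v : Fin n → R) :
    (vandermonde v).det = (of fun i j : Fin n => (descPochhammer R j).eval (v i)).det :=
  det_eval_matrixOfPolynomials_eq_det_vandermonde v _ (fun j => descPochhammer_natDegree R j)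
    (fun j => monic_descPochhammer R j)

lemma factorial_mul_sum_det_vandermonde [IsDomain R] {n : ℕ} (l : Fin (n + 1) → ℤ)
    (hl : ∀ i : Fin n, l i.succ ≤ l i.castSucc) :
    (n ! : R) * ∑ m ∈ Fintype.piFinset (fun i : Fin n => Ioc (l i.succ) (l i.castSucc)),
        (vandermonde fun i => (m i : R)).det
      = (-1) ^ n * (vandermonde fun i => (l i : R)).det := by
  let P (j : ℕ) (x : R) : R := (descPochhammer R j).eval x
  have hfac : (n ! : R) = ∏ j : Fin n, ((j : R) + 1) := by
    rw [Fin.prod_univ_eq_prod_range (fun j : ℕ => (j : R) + 1),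
      ← prod_range_add_one_eq_factorial]
    push_cast; rfl
  calc (n ! : R) * ∑ m ∈ Fintype.piFinset (fun i : Fin n => Ioc (l i.succ) (l i.castSucc)),
        (vandermonde fun i => (m i : R)).det
      = (∏ j : Fin n, ((j : R) + 1))
          * (of fun i j : Fin n => ∑ m ∈ Ioc (l i.succ) (l i.castSucc), P j m).det := by
        simp_rw [hfac, det_of_sum_rows, det_vandermonde_eq_det_descPochhammer]
        rfl
    _ = (of fun i j : Fin n => P (j + 1) (l i.castSucc + 1) - P (j + 1) (l i.succ + 1)).det := by
        rw [← det_mul_row]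
        congr 1
        ext i j
        exact mul_sum_Ioc_descPochhammer_eval j (hl i)
    _ = (-1) ^ n
          * (of fun i j : Fin n =>
              P (j + 1) (l i.succ + 1) - P (j + 1) (l i.castSucc + 1)).det := by
        rw [show (-1 : R) ^ n = (-1) ^ Fintype.card (Fin n) by simp, ← det_neg]
        congr 1
        ext i j
        simp
    _ = (-1) ^ n * (of fun i j : Fin (n + 1) => P j (l i + 1)).det := by
        rw [det_eq_det_succ_sub_castSucc _ (fun i => by simp [P])]
        rfl
    _ = (-1) ^ n * (vandermonde fun i => (l i : R)).det := by
        rw [← det_vandermonde_eq_det_descPochhammer, det_vandermonde_add]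

end Algebra

lemma prod_filter_fst_lt_snd {α M : Type*} [Fintype α] [LinearOrder α] [LocallyFiniteOrderTop α]
    [CommMonoid M] (f : α → α → M) :
    ∏ p ∈ univ.filter (fun p : α × α => p.1 < p.2), f p.1 p.2
      = ∏ i, ∏ j ∈ Ioi i, f i j := by
  rw [prod_filter, Fintype.prod_prod_type]
  refine prod_congr rfl fun i _ => ?_
  rw [← prod_filter]
  congr 1
  ext j
  simp

def weylDim {n : ℕ} (v : Fin n → ℤ) : ℚ :=
  ∏ p ∈ Finset.univ.filter (fun p : Fin n × Fin n => p.1 < p.2),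
    (((v p.1 : ℚ) - (v p.2 : ℚ) + ((p.2 : ℕ) : ℚ) - ((p.1 : ℕ) : ℚ))
      / (((p.2 : ℕ) : ℚ) - ((p.1 : ℕ) : ℚ)))

lemma weylDim_eq_div {n : ℕ} (v : Fin n → ℤ) :
    weylDim v = (vandermonde fun i => (v i : ℚ) - i).det
      / (vandermonde fun i : Fin n => -(i : ℚ)).det := by
  rw [det_vandermonde, det_vandermonde, ← prod_div_distrib, weylDim,
    prod_filter_fst_lt_snd (fun i j : Fin n => ((v i : ℚ) - v j + j - i) / ((j : ℚ) - i))]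
  refine prod_congr rfl fun i _ => ?_
  rw [← prod_div_distrib]
  refine prod_congr rfl fun j _ => ?_
  rw [← neg_div_neg_eq]
  ring

lemma factorial_mul_det_vandermonde_neg (N : ℕ) :
    (N ! : ℚ) * (vandermonde fun i : Fin N => -(i : ℚ)).det
      = (-1) ^ N * (vandermonde fun i : Fin (N + 1) => -(i : ℚ)).det := by
  have hsingle : Fintype.piFinset (fun i : Fin N =>
      Ioc (-((i.succ : ℕ) : ℤ)) (-((i.castSucc : ℕ) : ℤ)))
        = {fun i : Fin N => -((i : ℕ) : ℤ)} := by
    rw [← Fintype.piFinset_singleton]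
    congr 1
    ext i m
    simp only [Fin.val_succ, Fin.val_castSucc, mem_Ioc, mem_singleton]
    omega
  -- the summation identity for `l = -ρ`, where every interval `(l_{i+1}, l_i]` is a point
  have h := factorial_mul_sum_det_vandermonde (R := ℚ)
    (fun i : Fin (N + 1) => -((i : ℕ) : ℤ)) (fun i => by simp)
  rw [hsingle, sum_singleton] at h
  simpa using h

lemma sum_weylDim_interlacingRows {N : ℕ} (lam : Fin (N + 1) → ℤ) (hlam : Antitone lam) :
    ∑ μ ∈ interlacingRows lam, weylDim μ = weylDim lam := by
  let l : Fin (N + 1) → ℤ := fun i => lam i - i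
  have hl : ∀ i : Fin N, l i.succ ≤ l i.castSucc := fun i => by
    have := hlam (Fin.castSucc_le_succ i)
    simp only [l, Fin.val_succ, Fin.val_castSucc]
    omega
  have hshift : ∑ μ ∈ interlacingRows lam, (vandermonde fun i => (μ i : ℚ) - i).det
      = ∑ m ∈ Fintype.piFinset (fun i : Fin N => Ioc (l i.succ) (l i.castSucc)),
          (vandermonde fun i => (m i : ℚ)).det := by
    refine sum_nbij' (fun μ i => μ i - i) (fun m i => m i + i) ?_ ?_ (by simp) (by simp) (by simp)
    all_goals
      simp only [interlacingRows, Fintype.mem_piFinset, mem_Icc, mem_Ioc, l, Fin.val_succ,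
        Fin.val_castSucc]
      intro v hv i
      have := hv i
      omega
  have hsum := factorial_mul_sum_det_vandermonde (R := ℚ) l hl
  have hneg := factorial_mul_det_vandermonde_neg N
  have hfac : (N ! : ℚ) ≠ 0 := by positivity
  simp_rw [weylDim_eq_div, ← sum_div, hshift]
  rw [← mul_div_mul_left _ _ hfac, hsum, hneg, mul_div_mul_left _ _ (by simp)]
  simp [l]

theorem card_gtPattern_eq_weylDim (n : ℕ) (lam : Fin n → ℤ) (hlam : Antitone lam) :
    (Nat.card (GTPattern n lam) : ℚ) = weylDim lam := by
  induction n with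
  | zero => simp [card_gtPattern_zero, weylDim]
  | succ N ih =>
    rw [card_gtPattern_succ, Nat.cast_sum,
      sum_congr rfl fun μ hμ => ih μ (antitone_of_mem_interlacingRows hμ)]
    exact sum_weylDim_interlacingRows lam hlam

/-- the number of integer points of the type-A Gelfand–Tsetlin polytope
`GT_n(λ)` equals the Weyl dimension `∏_{i<j} (λ_i - λ_j + j - i)/(j - i)`. -/
theorem stmt7 (n : ℕ) (lam : Fin n → ℤ) (hlam : Antitone lam) :
    (Nat.card {x : Fin n × Fin n → ℤ //
        IsGTPatternZ n x ∧ ∀ k j : Fin n, (k : ℕ) = n - 1 → x (k, j) = lam j} : ℚ)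
      = ∏ p ∈ Finset.univ.filter (fun p : Fin n × Fin n => p.1 < p.2),
          (((lam p.1 : ℚ) - (lam p.2 : ℚ) + ((p.2 : ℕ) : ℚ) - ((p.1 : ℕ) : ℚ))
            / (((p.2 : ℕ) : ℚ) - ((p.1 : ℕ) : ℚ))) :=
  card_gtPattern_eq_weylDim n lam hlam
end

section
/- The branching rule for restriction from U(n) to U(n−1): for an integral dominant weight λ ∈ Z^n (λ_1 ≥ ... ≥ λ_n), the restriction of the irreducible U(n)-representation V_λ to U(n−1) decomposes multiplicity-free as ⊕_β V_β over all β ∈ Z^{n−1} with λ_1 ≥ β_1 ≥ λ_2 ≥ β_2 ≥ ... ≥ β_{n−1} ≥ λ_n. -/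
/-- The alternant `a_μ(x) = det(x_i^{μ_j + n - 1 - j})` (bialternant numerator of the
Schur function `s_μ`, for a possibly non-polynomial integral weight `μ`). -/
noncomputable def aalt (n : ℕ) (mu : Fin n → ℤ) (x : Fin n → ℝ) : ℝ :=
  Matrix.det (Matrix.of fun i j : Fin n => x i ^ (mu j + ((n : ℤ) - 1 - ((j : ℕ) : ℤ))))

/-!
Clearing the Vandermonde denominators, `Δ_{n+1}(x, 1) = Δ_n(x) · ∏ᵢ (xᵢ - 1)`, turns the character
identity into an identity of alternants. The alternant `a_λ(x, 1)` has a last row of ones;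
subtracting adjacent columns and expanding along that row leaves the `n × n` determinant with
entries `xᵢ ^ (λⱼ + n - j) - xᵢ ^ (λⱼ₊₁ + n - 1 - j)`. Each entry is `xᵢ - 1` times the geometric
sum of `xᵢ ^ (k + n - 1 - j)` over `λⱼ₊₁ ≤ k ≤ λⱼ`, so pulling `xᵢ - 1` out of every row and
expanding the determinant multilinearly in its columns yields `∑_β a_β(x)` over the interlacing `β`.
-/

open Matrix Finset

theorem Matrix.det_eq_det_sub_succ_of_last_row_eq_one {R : Type*} [CommRing R] {n : ℕ}
    (M : Matrix (Fin (n + 1)) (Fin (n + 1)) R) (hM : ∀ j, M (Fin.last n) j = 1) :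
    M.det = (of fun i j : Fin n => M i.castSucc j.castSucc - M i.castSucc j.succ).det := by
  -- subtracting from each column its predecessor turns the last row into `(1, 0, …, 0)`
  let B : Matrix (Fin (n + 1)) (Fin (n + 1)) R :=
    of fun i => Fin.cases (M i 0) fun j => M i j.succ - M i j.castSucc
  have hB : M.det = B.det :=
    det_eq_of_forall_col_eq_smul_add_pred (fun _ => 1) (fun _ => rfl) fun i j => by simp [B]
  have hBlast : ∀ j : Fin n, B (Fin.last n) j.succ = 0 := fun j => by simp [B, hM]
  rw [hB, det_succ_row B (Fin.last n), Fintype.sum_eq_single 0 fun j hj => ?_]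
  · have : B.submatrix (Fin.last n).succAbove (0 : Fin (n + 1)).succAbove
        = -of fun i j : Fin n => M i.castSucc j.castSucc - M i.castSucc j.succ := by
      ext i j; simp [B]
    rw [this, det_neg]
    simp [B, hM, ← mul_assoc, ← pow_add]
  · obtain ⟨j, rfl⟩ := Fin.exists_succ_eq.mpr hj
    simp [hBlast]

theorem Matrix.det_of_sum_finset_col {R α ι : Type*} [CommRing R] [Fintype ι] [DecidableEq ι]
    (A : ι → Finset α) (g : ι → α → ι → R) :
    (of fun i j => ∑ k ∈ A j, g j k i).det
      = ∑ r ∈ Fintype.piFinset A, (of fun i j => g j (r j) i).det := by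
  simp_rw [← det_transpose (of _)]
  convert (detRowAlternating (n := ι) (R := R)).map_sum_finset g A using 2 with r
  · congr 1; ext j i; simp
  · rfl

theorem mul_sum_Icc_zpow {K : Type*} [DivisionRing K] {x : K} (hx : x ≠ 0) {a b : ℤ}
    (hab : a ≤ b) : (x - 1) * ∑ k ∈ Icc a b, x ^ k = x ^ (b + 1) - x ^ a := by
  induction b, hab using Int.leInduction with
  | base => simp [zpow_add_one₀ hx, sub_mul, (Commute.self_zpow₀ x a).eq]
  | succ b hab ih =>
    rw [← insert_Icc_right_eq_Icc_add_one (by omega), sum_insert (by simp), mul_add, ih,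
      zpow_add_one₀ hx (b + 1), sub_mul, one_mul, (Commute.self_zpow₀ x _).eq]
    abel

theorem aalt_snoc_one (n : ℕ) (lam : Fin (n + 1) → ℤ) (x : Fin n → ℝ) :
    aalt (n + 1) lam (Fin.snoc x 1) = (of fun i j : Fin n =>
      x i ^ (lam j.castSucc + ((n : ℤ) - j)) - x i ^ (lam j.succ + ((n : ℤ) - 1 - j))).det := by
  rw [aalt, det_eq_det_sub_succ_of_last_row_eq_one _ fun j => by simp]
  congr 1
  ext i j
  simp only [of_apply, Fin.snoc_castSucc, Fin.val_castSucc, Fin.val_succ]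
  congr 2 <;> push_cast <;> ring

theorem sum_aalt_piFinset (n : ℕ) (A : Fin n → Finset ℤ) (x : Fin n → ℝ) :
    ∑ b ∈ Fintype.piFinset A, aalt n b x
      = (of fun i j : Fin n => ∑ k ∈ A j, x i ^ (k + ((n : ℤ) - 1 - j))).det :=
  (det_of_sum_finset_col A fun j k i => x i ^ (k + ((n : ℤ) - 1 - j))).symm

/-- the branching rule for the restriction from `U(n+1)` to `U(n)`,
in its equivalent bialternant/character form: since
`a^{(n+1)}_λ(x,1) = Δ_{n+1}(x,1)·s_λ(x,1)` and `Δ_{n+1}(x,1) = Δ_n(x)·∏(x_i-1)`,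
the identity `s_λ(x₁,…,x_n,1) = Σ_{β interlacing λ} s_β(x₁,…,x_n)` is equivalent to
`a^{(n+1)}_λ(x,1) = ∏ᵢ(xᵢ-1) · Σ_{β : λ_{i+1} ≤ β_i ≤ λ_i} a^{(n)}_β(x)`,
i.e. `Res^{U(n+1)}_{U(n)} V_λ = ⊕_β V_β`, multiplicity free. -/
theorem stmt10 (n : ℕ) (lam : Fin (n + 1) → ℤ) (hlam : Antitone lam)
    (x : Fin n → ℝ) (hx : ∀ i, x i ≠ 0) :
    aalt (n + 1) lam (Fin.snoc x 1)
      = (∏ i, (x i - 1)) *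
        ∑ b ∈ Fintype.piFinset
            (fun i : Fin n => Finset.Icc (lam i.succ) (lam i.castSucc)),
          aalt n b x := by
  rw [aalt_snoc_one, sum_aalt_piFinset, ← det_mul_column]
  congr 1
  ext i j
  have hj : lam j.succ ≤ lam j.castSucc := hlam (Fin.castSucc_le_succ j)
  simp_rw [of_apply, zpow_add₀ (hx i) _ ((n : ℤ) - 1 - j), ← sum_mul, ← mul_assoc,
    mul_sum_Icc_zpow (hx i) hj, sub_mul, ← zpow_add₀ (hx i)]
  congr 2
  ring
end

section
/- The sum of Lebesgue volumes of type-A Gelfand–Tsetlin polytopes satisfies the recursion: for λ ∈ R^n with λ_1 > ... > λ_n, ∫_{β ⪰ λ} vol(GT_{n−1}(β)) dβ = vol(GT_n(λ)), i.e., ∫_{{β ∈ R^{n−1}: λ_1 ≥ β_1 ≥ ... ≥ β_{n−1} ≥ λ_n}} ∏_{1≤i<j≤n−1} (β_i − β_j)/(j−i) dβ = ∏_{1≤i<j≤n} (λ_i − λ_j)/(j−i). -/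
/-!
Both sides are ratios of Vandermonde determinants: the product `∏_{i<j} (v_i - v_j)/(j - i)` is
`det V(v) / det V(0, -1, -2, …)`. The domain of integration is the box `∏ [λ_{i+1}, λ_i]`, and the
`i`-th row of `V(β)` depends only on `β_i`, so by multilinearity and Fubini the integral of
`det V(β)` is the determinant of the row-wise integrals `(λ_i^{j+1} - λ_{i+1}^{j+1}) / (j+1)`.
Subtracting consecutive rows of `V(λ)` identifies that determinant with `det V(λ)` up to the
factor `∏_j (-(j+1))⁻¹`, which is exactly the ratio of the normalising determinants in sizes
`n` and `n + 1`.
-/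

open MeasureTheory Finset Matrix

theorem prod_filter_lt_sub_div_sub_eq_det_vandermonde_div {K : Type*} [Field K] {m : ℕ}
    (v w : Fin m → K) :
    ∏ p ∈ univ.filter (fun p : Fin m × Fin m => p.1 < p.2), (v p.1 - v p.2) / (w p.1 - w p.2)
      = (vandermonde v).det / (vandermonde w).det := by
  rw [det_vandermonde, det_vandermonde, ← prod_div_distrib, prod_filter, Fintype.prod_prod_type]
  refine prod_congr rfl fun i _ => ?_
  rw [← prod_div_distrib, ← filter_lt_eq_Ioi, prod_filter]
  refine prod_congr rfl fun j _ => ?_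
  split_ifs
  · rw [← neg_sub (v j), ← neg_sub (w j), neg_div_neg_eq]
  · rfl

theorem det_vandermonde_succ {R : Type*} [CommRing R] {n : ℕ} (v : Fin (n + 1) → R) :
    (vandermonde v).det
      = (∏ j : Fin n, (v j.succ - v 0)) * (vandermonde fun i => v i.succ).det := by
  rw [det_vandermonde, det_vandermonde, Fin.prod_univ_succ, Fin.prod_Ioi_zero]
  simp only [Fin.prod_Ioi_succ]

theorem det_vandermonde_neg_natCast_succ (n : ℕ) :
    (vandermonde fun i : Fin (n + 1) => -((i : ℕ) : ℝ)).det
      = (∏ j : Fin n, -((j : ℕ) + 1 : ℝ))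
          * (vandermonde fun i : Fin n => -((i : ℕ) : ℝ)).det := by
  rw [det_vandermonde_succ]
  simp only [Fin.val_succ, Fin.val_zero, Nat.cast_add, Nat.cast_one, Nat.cast_zero, neg_zero,
    sub_zero, neg_add, ← sub_eq_add_neg, det_vandermonde_sub]

theorem det_of_sub_pow_succ_eq_det_vandermonde {R : Type*} [CommRing R] {n : ℕ}
    (x : Fin (n + 1) → R) :
    (of fun i j : Fin n => x i.succ ^ ((j : ℕ) + 1) - x i.castSucc ^ ((j : ℕ) + 1)).det
      = (vandermonde x).det := by
  let B : Matrix (Fin (n + 1)) (Fin (n + 1)) R :=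
    of fun i j =>
      Fin.cases (x 0 ^ (j : ℕ)) (fun i => x i.succ ^ (j : ℕ) - x i.castSucc ^ (j : ℕ)) i
  have hB : (vandermonde x).det = B.det :=
    det_eq_of_forall_row_eq_smul_add_pred (fun _ => 1) (fun j => rfl) fun i j => by
      simp [B, vandermonde_apply]
  have hB_zero : B 0 0 = 1 := by simp [B]
  have hB_succ : ∀ i : Fin n, B i.succ 0 = 0 := by simp [B]
  rw [hB, det_succ_column_zero, Fin.sum_univ_succ, hB_zero]
  simp only [hB_succ, mul_zero, zero_mul, sum_const_zero, add_zero, Fin.val_zero, pow_zero,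
    mul_one, one_mul, Fin.succAbove_zero]
  rfl

theorem integral_pi_det_eq_det_integral {𝕜 ι α : Type*} [RCLike 𝕜] [Fintype ι] [DecidableEq ι]
    [MeasurableSpace α] (μ : ι → Measure α) [∀ i, SigmaFinite (μ i)] (f : ι → α → 𝕜)
    (hf : ∀ i j, Integrable (f j) (μ i)) :
    ∫ x, (of fun i j => f j (x i)).det ∂(Measure.pi μ)
      = (of fun i j => ∫ y, f j y ∂(μ i)).det := by
  simp only [← det_transpose (of _), det_apply', transpose_apply, of_apply]
  rw [integral_finsetSum _ fun σ _ =>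
    (Integrable.fintype_prod_dep fun i => hf i (σ i)).const_mul _]
  simp only [integral_const_mul, integral_fintype_prod_eq_prod]

theorem setIntegral_pi_Icc_det_vandermonde {n : ℕ} (a c : Fin n → ℝ) (hac : ∀ i, a i ≤ c i) :
    ∫ x in Set.univ.pi fun i => Set.Icc (a i) (c i), (vandermonde x).det
      = (∏ j : Fin n, -((j : ℕ) + 1 : ℝ))⁻¹
          * (of fun i j : Fin n => a i ^ ((j : ℕ) + 1) - c i ^ ((j : ℕ) + 1)).det := by
  rw [volume_pi, Measure.restrict_pi_pi, ← prod_inv_distrib, ← det_mul_row]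
  refine (integral_pi_det_eq_det_integral _ (fun (j : Fin n) (y : ℝ) => y ^ (j : ℕ)) fun i j =>
    (continuous_pow (j : ℕ)).integrableOn_Icc).trans (congrArg det (ext fun i j => ?_))
  simp only [of_apply]
  rw [integral_Icc_eq_integral_Ioc, ← intervalIntegral.integral_of_le (hac i), integral_pow]
  field_simp
  ring

/-- `vol GT_m(v)` for strictly decreasing `v`. -/
noncomputable def gelfandTsetlinVolume {m : ℕ} (v : Fin m → ℝ) : ℝ :=
  ∏ p ∈ univ.filter (fun p : Fin m × Fin m => p.1 < p.2),
    (v p.1 - v p.2) / (((p.2 : ℕ) : ℝ) - ((p.1 : ℕ) : ℝ))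

theorem gelfandTsetlinVolume_eq_det_vandermonde_div {m : ℕ} (v : Fin m → ℝ) :
    gelfandTsetlinVolume v
      = (vandermonde v).det / (vandermonde fun i : Fin m => -((i : ℕ) : ℝ)).det := by
  rw [← prod_filter_lt_sub_div_sub_eq_det_vandermonde_div]
  simp only [gelfandTsetlinVolume, neg_sub_neg]

/-- the recursion for volumes of type-A Gelfand–Tsetlin polytopes:
`∫_{λ ⪰ β} ∏_{i<j} (β_i-β_j)/(j-i) dβ = ∏_{i<j} (λ_i-λ_j)/(j-i)`. -/
theorem stmt11 (n : ℕ) (lam : Fin (n + 1) → ℝ)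
    (hlam : ∀ i j : Fin (n + 1), i < j → lam j < lam i) :
    ∫ b in {b : Fin n → ℝ | ∀ i : Fin n, lam i.succ ≤ b i ∧ b i ≤ lam i.castSucc},
        ∏ p ∈ Finset.univ.filter (fun p : Fin n × Fin n => p.1 < p.2),
          ((b p.1 - b p.2) / (((p.2 : ℕ) : ℝ) - ((p.1 : ℕ) : ℝ)))
      = ∏ p ∈ Finset.univ.filter (fun p : Fin (n + 1) × Fin (n + 1) => p.1 < p.2),
          ((lam p.1 - lam p.2) / (((p.2 : ℕ) : ℝ) - ((p.1 : ℕ) : ℝ))) := by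
  have hbox : {b : Fin n → ℝ | ∀ i : Fin n, lam i.succ ≤ b i ∧ b i ≤ lam i.castSucc}
      = Set.univ.pi fun i => Set.Icc (lam i.succ) (lam i.castSucc) := by
    ext b
    simp only [Set.mem_ofPred_eq, Set.mem_pi, Set.mem_univ, Set.mem_Icc, forall_const]
  show ∫ b in _, gelfandTsetlinVolume b = gelfandTsetlinVolume lam
  simp only [gelfandTsetlinVolume_eq_det_vandermonde_div]
  rw [hbox, integral_div,
    setIntegral_pi_Icc_det_vandermonde _ _ fun i => (hlam _ _ i.castSucc_lt_succ).le,
    det_of_sub_pow_succ_eq_det_vandermonde, det_vandermonde_neg_natCast_succ]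
  ring
end

section
/- Let w be a nonnegative integrable weight on R with all moments finite, and suppose (p_i)_{i≥0} are polynomials with deg p_i = i and ∫ p_i p_j w = δ_{ij}. If a probability measure on R^n has density proportional to Δ_n(λ)^2 ∏_{i=1}^n w(λ_i) (Δ_n the Vandermonde), then the induced point process is determinantal with correlation kernel K(x,y) = ∑_{i=0}^{n−1} p_i(x) p_i(y) √(w(x) w(y)), i.e., for disjoint Borel sets B_1,...,B_k, E[∏_j #{i: λ_i ∈ B_j}] = ∫_{B_1×...×B_k} det(K(x_a, x_b))_{k×k} dx_1...dx_k. -/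
/-!
By column operations `det (λ_a ^ j) = (∏ c_j)⁻¹ det (p_j(λ_a))`, where `c_j` is the leading
coefficient of `p_j`, so the density is a constant multiple of
`det (p_j(λ_a))² ∏ w(λ_a) = ∑_{σ,τ} sgn σ sgn τ ∏_a p_{σ a}(λ_a) p_{τ a}(λ_a) w(λ_a)`.
For disjoint `B_j` the product of the counts `#{i : λ_i ∈ B_j}` is the number of embeddings
`f : [k] ↪ [n]` with `λ_{f j} ∈ B_j`, and by Fubini the expanded density integrates over such a box
to a sum of products of Gram integrals `∫_B p_i p_{i'} w`. Off the range of `f` these are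
`δ_{i i'}`, which collapses each `τ`-sum to the `k × k` Gram determinant
`det (∫_{B_a} p_{g a} p_{g b} w)` with `g = σ ∘ f`. Expanding `det K` over permutations and `K` over
`i < n` yields the same sum of Gram determinants over embeddings `g`, and the remaining factor
`n!` from the sum over `σ` is exactly the normalisation, read off from the case `k = 0`.
-/

open MeasureTheory Polynomial Finset Equiv Function Matrix

theorem Fintype.sum_embedding_eq_sum_of_not_injective {α β M : Type*} [Fintype α] [Fintype β]
    [DecidableEq α] [DecidableEq β] [AddCommMonoid M] (D : (α → β) → M)
    (hD : ∀ g, ¬Injective g → D g = 0) :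
    ∑ g : α ↪ β, D g = ∑ g, D g := by
  classical
  rw [← Fintype.sum_equiv (Equiv.subtypeInjectiveEquivEmbedding α β) (fun g => D g) _
    (fun _ => rfl), ← Finset.sum_subtype _ (fun _ => Finset.mem_filter_univ _),
    Finset.sum_filter_of_ne fun g _ => not_imp_comm.mp (hD g)]

theorem Set.comp_mem_univ_pi_iff {ι κ α : Type*} {f : κ → ι} (hf : Injective f)
    (B : κ → Set α) (l : ι → α) :
    l ∘ f ∈ Set.univ.pi B ↔ l ∈ Set.univ.pi (extend f B fun _ => Set.univ) := by
  simp only [Set.mem_univ_pi]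
  refine ⟨fun h a => ?_, fun h j => by simpa [hf.extend_apply] using h (f j)⟩
  by_cases ha : ∃ j, f j = a
  · obtain ⟨j, rfl⟩ := ha
    simpa [hf.extend_apply] using h j
  · simp [extend_apply' _ _ _ ha]

theorem prod_sum_indicator_eq_sum_embedding {ι κ α R : Type*} [Fintype ι] [DecidableEq ι]
    [Fintype κ] [DecidableEq κ] [CommSemiring R] {B : κ → Set α}
    (hB : Pairwise (Disjoint on B)) (l : ι → α) :
    ∏ j, ∑ i, (B j).indicator (fun _ => (1 : R)) (l i)
      = ∑ f : κ ↪ ι, (Set.univ.pi B).indicator (fun _ => (1 : R)) (l ∘ f) := by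
  classical
  have hprod : ∀ g : κ → ι, ∏ j, (B j).indicator (fun _ => (1 : R)) (l (g j))
      = (Set.univ.pi B).indicator (fun _ => (1 : R)) (l ∘ g) := by
    intro g
    simp only [Set.indicator_apply, Set.mem_univ_pi, Function.comp_apply]
    split_ifs with h
    · exact Finset.prod_eq_one fun j _ => if_pos (h j)
    · obtain ⟨j, hj⟩ := not_forall.mp h
      exact Finset.prod_eq_zero (Finset.mem_univ j) (if_neg hj)
  rw [Finset.prod_univ_sum, Fintype.piFinset_univ, Finset.sum_congr rfl fun g _ => hprod g,
    ← Fintype.sum_embedding_eq_sum_of_not_injective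
      (fun g => (Set.univ.pi B).indicator (fun _ => (1 : R)) (l ∘ g))]
  intro g hg
  obtain ⟨j₁, j₂, hg, hne⟩ : ∃ j₁ j₂, g j₁ = g j₂ ∧ j₁ ≠ j₂ := by
    simpa [Injective] using hg
  refine Set.indicator_of_notMem (fun h => ?_) _
  rw [Set.mem_univ_pi] at h
  exact Set.disjoint_left.mp (hB hne) (h j₁) (by simpa [hg] using h j₂)

theorem Matrix.det_eq_det_submatrix_of_row_eq_one {m n R : Type*} [Fintype m] [DecidableEq m]
    [Fintype n] [DecidableEq n] [CommRing R] (N : Matrix n n R) (f : m ↪ n)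
    (h : ∀ a ∉ Set.range f, N a = (1 : Matrix n n R) a) :
    N.det = (N.submatrix f f).det := by
  classical
  have hoff : ∀ a, a ∉ Set.range f → ∀ b, b ∈ Set.range f → N a b = 0 := by
    intro a ha b hb
    rw [h a ha, one_apply_ne]
    rintro rfl
    exact ha hb
  have hcompl : toSquareBlockProp N (· ∉ Set.range f) = 1 := by
    ext ⟨a, ha⟩ ⟨b, hb⟩
    simp [toSquareBlockProp, toBlock_apply, h a ha, one_apply]
  let e : m ≃ {a // a ∈ Set.range f} := Equiv.ofInjective f f.injective
  have hsub : N.submatrix f f = (toSquareBlockProp N (· ∈ Set.range f)).submatrix e e := rfl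
  rw [twoBlockTriangular_det N (· ∈ Set.range f) hoff, hcompl, det_one, mul_one, hsub,
    det_submatrix_equiv_self]
  convert rfl

theorem Matrix.sign_mul_sum_sign_mul_prod_eq_det_submatrix {m n R : Type*} [Fintype m]
    [DecidableEq m] [Fintype n] [DecidableEq n] [CommRing R] (M : n → Matrix n n R) (f : m ↪ n)
    (hM : ∀ a ∉ Set.range f, M a = 1) (σ : Perm n) :
    ((Perm.sign σ : ℤ) : R) * ∑ τ : Perm n, ((Perm.sign τ : ℤ) : R) * ∏ a, M a (σ a) (τ a)
      = (of fun i j => M (f i) (σ (f i)) (σ (f j))).det := by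
  set N : Matrix n n R := of fun a b => M a (σ a) (σ b)
  have hN : ∀ a ∉ Set.range f, N a = (1 : Matrix n n R) a := by
    intro a ha
    ext b
    simp [N, hM a ha, one_apply, σ.injective.eq_iff]
  have hexpand : ∑ τ : Perm n, ((Perm.sign τ : ℤ) : R) * ∏ a, M a (σ a) (τ a)
      = (of fun a i => M a (σ a) i).det := by
    rw [← det_transpose, det_apply']
    rfl
  rw [hexpand, ← det_permute']
  exact det_eq_det_submatrix_of_row_eq_one N f hN

namespace MeasureTheory

variable {ι E 𝕜 : Type*} [Fintype ι] [RCLike 𝕜] [MeasurableSpace E] (μ : ι → Measure E)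
  [∀ i, SigmaFinite (μ i)] (T : ι → Set E) (F : ι → E → 𝕜)

theorem setIntegral_univ_pi_prod :
    ∫ x in Set.univ.pi T, ∏ i, F i (x i) ∂Measure.pi μ = ∏ i, ∫ x in T i, F i x ∂μ i := by
  rw [Measure.restrict_pi_pi]
  exact integral_fintype_prod_eq_prod F

theorem integrableOn_univ_pi_prod (hF : ∀ i, IntegrableOn (F i) (T i) (μ i)) :
    IntegrableOn (fun x => ∏ i, F i (x i)) (Set.univ.pi T) (Measure.pi μ) := by
  rw [IntegrableOn, Measure.restrict_pi_pi]
  exact Integrable.fintype_prod hF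

end MeasureTheory

theorem MeasureTheory.integrable_eval_mul_eval_mul {μ : Measure ℝ} {w : ℝ → ℝ}
    (hmom : ∀ j : ℕ, Integrable (fun x => x ^ j * w x) μ) (q r : ℝ[X]) :
    Integrable (fun x => q.eval x * r.eval x * w x) μ := by
  simp_rw [← eval_mul, eval_eq_sum_range, Finset.sum_mul, mul_assoc]
  exact integrable_finsetSum _ fun m _ => (hmom m).const_mul _

theorem Matrix.prod_sub_sq_eq_det_vandermonde_sq {R : Type*} [CommRing R] {n : ℕ} (l : Fin n → R) :
    (∏ q ∈ univ.filter (fun q : Fin n × Fin n => q.1 < q.2), (l q.1 - l q.2)) ^ 2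
      = (vandermonde l).det ^ 2 := by
  rw [det_vandermonde, ← Finset.prod_pow, ← Finset.prod_pow, Finset.prod_filter,
    Fintype.prod_prod_type]
  refine Finset.prod_congr rfl fun i _ => ?_
  rw [← Finset.prod_pow, ← filter_lt_eq_Ioi, Finset.prod_filter]
  exact Finset.prod_congr rfl fun j _ => by split_ifs <;> ring

theorem Matrix.det_vandermonde_eq_inv_prod_leadingCoeff_mul_det {K : Type*} [Field K] {n : ℕ}
    {p : ℕ → K[X]} (hdeg : ∀ i, (p i).degree = i) (l : Fin n → K) :
    (vandermonde l).det
      = (∏ j : Fin n, (p j).leadingCoeff)⁻¹ * (of fun a j : Fin n => (p j).eval (l a)).det := by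
  have hlc : ∀ i, (p i).leadingCoeff ≠ 0 := fun i =>
    leadingCoeff_ne_zero.mpr fun h => by simpa [h] using hdeg i
  let q : Fin n → K[X] := fun j => C (p j).leadingCoeff⁻¹ * p j
  have hq_deg : ∀ j, (q j).natDegree = j := fun j => by
    rw [natDegree_C_mul (inv_ne_zero (hlc j)), natDegree_eq_of_degree_eq_some (hdeg j)]
  have hq_monic : ∀ j, (q j).Monic := fun j => by
    rw [Monic, leadingCoeff_mul, leadingCoeff_C, inv_mul_cancel₀ (hlc j)]
  rw [det_eval_matrixOfPolynomials_eq_det_vandermonde l q hq_deg hq_monic, ← prod_inv_distrib,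
    ← det_mul_row]
  simp [q]

namespace OrthogonalEnsemble

variable (w : ℝ → ℝ) (p : ℕ → ℝ[X]) {n k : ℕ}

noncomputable def gram (B : Set ℝ) (i j : ℕ) : ℝ := ∫ x in B, (p i).eval x * (p j).eval x * w x

noncomputable def gramMatrix (B : Fin k → Set ℝ) (g : Fin k → Fin n) : Matrix (Fin k) (Fin k) ℝ :=
  of fun a b => gram w p (B a) (g a) (g b)

def density (l : Fin n → ℝ) : ℝ :=
  (of fun a j : Fin n => (p j).eval (l a)).det ^ 2 * ∏ a, w (l a)

theorem density_eq_sum (l : Fin n → ℝ) :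
    density w p l = ∑ σ : Perm (Fin n), ∑ τ : Perm (Fin n),
      ((Perm.sign σ : ℤ) : ℝ) * ((Perm.sign τ : ℤ) : ℝ)
        * ∏ a, (p (σ a)).eval (l a) * (p (τ a)).eval (l a) * w (l a) := by
  rw [density, ← det_transpose, det_apply', sq, sum_mul_sum, sum_mul]
  refine sum_congr rfl fun σ _ => ?_
  rw [sum_mul]
  refine sum_congr rfl fun τ _ => ?_
  simp only [transpose_apply, of_apply, prod_mul_distrib]
  ring

variable {w p}

theorem integrable_density (hmom : ∀ j : ℕ, Integrable (fun x => x ^ j * w x)) :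
    Integrable (density w p (n := n)) := by
  simp_rw [funext (density_eq_sum w p)]
  refine integrable_finsetSum _ fun σ _ => integrable_finsetSum _ fun τ _ => ?_
  exact (Integrable.fintype_prod (μ := fun _ : Fin n => (volume : Measure ℝ)) fun a =>
    integrable_eval_mul_eval_mul hmom _ _).const_mul _

theorem integrableOn_prod_eval_mul_eval_mul
    (hmom : ∀ j : ℕ, Integrable (fun x => x ^ j * w x)) {ι : Type*} [Fintype ι]
    (T : ι → Set ℝ) (i j : ι → ℕ) :
    IntegrableOn (fun x : ι → ℝ => ∏ a, (p (i a)).eval (x a) * (p (j a)).eval (x a) * w (x a))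
      (Set.univ.pi T) :=
  integrableOn_univ_pi_prod (fun _ => volume) T _ fun _ =>
    (integrable_eval_mul_eval_mul hmom _ _).integrableOn

theorem setIntegral_prod_eval_mul_eval_mul {ι : Type*} [Fintype ι] (T : ι → Set ℝ)
    (i j : ι → ℕ) :
    ∫ x in Set.univ.pi T, ∏ a, (p (i a)).eval (x a) * (p (j a)).eval (x a) * w (x a)
      = ∏ a, gram w p (T a) (i a) (j a) :=
  setIntegral_univ_pi_prod (fun _ => volume) T fun a x => (p (i a)).eval x * (p (j a)).eval x * w x

theorem setIntegral_density (hmom : ∀ j : ℕ, Integrable (fun x => x ^ j * w x))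
    (T : Fin n → Set ℝ) :
    ∫ l in Set.univ.pi T, density w p l = ∑ σ : Perm (Fin n), ∑ τ : Perm (Fin n),
      ((Perm.sign σ : ℤ) : ℝ) * ((Perm.sign τ : ℤ) : ℝ) * ∏ a, gram w p (T a) (σ a) (τ a) := by
  simp_rw [funext (density_eq_sum w p)]
  rw [integral_finsetSum _ fun σ _ => integrable_finsetSum _ fun τ _ =>
    (integrableOn_prod_eval_mul_eval_mul hmom T _ _).const_mul _]
  refine sum_congr rfl fun σ _ => ?_
  rw [integral_finsetSum _ fun τ _ => (integrableOn_prod_eval_mul_eval_mul hmom T _ _).const_mul _]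
  simp_rw [integral_const_mul, setIntegral_prod_eval_mul_eval_mul]

theorem gram_univ (horth : ∀ i j, ∫ x, (p i).eval x * (p j).eval x * w x
      = if i = j then (1 : ℝ) else 0) (i j : Fin n) :
    gram w p Set.univ i j = (1 : Matrix (Fin n) (Fin n) ℝ) i j := by
  simp [gram, horth, one_apply, Fin.val_inj]

theorem setIntegral_density_extend (hmom : ∀ j : ℕ, Integrable (fun x => x ^ j * w x))
    (horth : ∀ i j, ∫ x, (p i).eval x * (p j).eval x * w x = if i = j then (1 : ℝ) else 0)
    (B : Fin k → Set ℝ) (f : Fin k ↪ Fin n) :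
    ∫ l in Set.univ.pi (extend f B fun _ => Set.univ), density w p l
      = ∑ σ : Perm (Fin n), (gramMatrix w p B (f.trans σ.toEmbedding)).det := by
  let M : Fin n → Matrix (Fin n) (Fin n) ℝ :=
    fun a => of fun i j => gram w p (extend f B (fun _ => Set.univ) a) i j
  have hM : ∀ a ∉ Set.range f, M a = 1 := fun a ha => by
    ext i j
    simp only [M, of_apply, extend_apply' _ _ _ ha, gram_univ horth]
  rw [setIntegral_density hmom]
  refine sum_congr rfl fun σ _ => ?_
  simp_rw [mul_assoc, ← mul_sum]
  refine (sign_mul_sum_sign_mul_prod_eq_det_submatrix M f hM σ).trans ?_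
  simp [M, gramMatrix, f.injective.extend_apply]

theorem integral_density_mul_prod_count (hmom : ∀ j : ℕ, Integrable (fun x => x ^ j * w x))
    (horth : ∀ i j, ∫ x, (p i).eval x * (p j).eval x * w x = if i = j then (1 : ℝ) else 0)
    (B : Fin k → Set ℝ) (hBmeas : ∀ j, MeasurableSet (B j))
    (hBdisj : Pairwise (Disjoint on B)) :
    ∫ l, density w p l * ∏ j, ∑ i : Fin n, (B j).indicator (fun _ => (1 : ℝ)) (l i)
      = n.factorial * ∑ g : Fin k ↪ Fin n, (gramMatrix w p B g).det := by
  have hmeas : ∀ f : Fin k ↪ Fin n,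
      MeasurableSet (Set.univ.pi (extend f B fun _ => Set.univ)) := fun f =>
    MeasurableSet.univ_pi fun a => by
      by_cases ha : ∃ j, f j = a
      · obtain ⟨j, rfl⟩ := ha
        simpa [f.injective.extend_apply] using hBmeas j
      · simp [extend_apply' _ _ _ ha]
  have hcount : ∀ l : Fin n → ℝ, density w p l * ∏ j, ∑ i, (B j).indicator (fun _ => 1) (l i)
      = ∑ f : Fin k ↪ Fin n, (Set.univ.pi (extend f B fun _ => Set.univ)).indicator
          (density w p) l := fun l => by
    rw [prod_sum_indicator_eq_sum_embedding hBdisj, mul_sum]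
    refine sum_congr rfl fun f _ => ?_
    classical
    simp only [Set.indicator_apply, Set.comp_mem_univ_pi_iff f.injective, mul_ite, mul_one,
      mul_zero]
  simp_rw [hcount]
  rw [integral_finsetSum _ fun f _ => (integrable_density hmom).indicator (hmeas f)]
  simp_rw [integral_indicator (hmeas _), setIntegral_density_extend hmom horth]
  rw [sum_comm]
  have hshift : ∀ σ : Perm (Fin n), ∑ f : Fin k ↪ Fin n,
      (gramMatrix w p B (f.trans σ.toEmbedding)).det
        = ∑ g : Fin k ↪ Fin n, (gramMatrix w p B g).det :=
    fun σ => Fintype.sum_equiv ((Equiv.refl _).embeddingCongr σ) _ _ fun f => rfl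
  simp_rw [hshift, sum_const, card_univ, Fintype.card_perm, Fintype.card_fin, nsmul_eq_mul]

theorem integral_density (hmom : ∀ j : ℕ, Integrable (fun x => x ^ j * w x))
    (horth : ∀ i j, ∫ x, (p i).eval x * (p j).eval x * w x = if i = j then (1 : ℝ) else 0) :
    ∫ l : Fin n → ℝ, density w p l = n.factorial := by
  simpa using integral_density_mul_prod_count (n := n) hmom horth (fun j => j.elim0)
    (fun j => j.elim0) fun j => j.elim0

theorem det_kernel_eq_sum (hw0 : ∀ x, 0 ≤ w x) (x : Fin k → ℝ) :
    (of fun a b : Fin k => (∑ i ∈ range n, (p i).eval (x a) * (p i).eval (x b))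
        * √(w (x a) * w (x b))).det
      = ∑ π : Perm (Fin k), ∑ g : Fin k → Fin n, ((Perm.sign π : ℤ) : ℝ)
          * ∏ a, (p (g a)).eval (x a) * (p (g (π⁻¹ a))).eval (x a) * w (x a) := by
  have hsqrt : ∀ π : Perm (Fin k), ∏ a, √(w (x a) * w (x (π a))) = ∏ a, w (x a) := fun π => by
    simp_rw [Real.sqrt_mul (hw0 _), prod_mul_distrib, Equiv.prod_comp π fun a => √(w (x a)),
      ← prod_mul_distrib, Real.mul_self_sqrt (hw0 _)]
  have hshift : ∀ (π : Perm (Fin k)) (g : Fin k → Fin n),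
      ∏ a, (p (g a)).eval (x (π a)) = ∏ a, (p (g (π⁻¹ a))).eval (x a) := fun π g => by
    rw [← Equiv.prod_comp π fun a => (p (g (π⁻¹ a))).eval (x a)]
    simp
  rw [← det_transpose, det_apply']
  refine sum_congr rfl fun π _ => ?_
  simp only [transpose_apply, of_apply, prod_mul_distrib, hsqrt, ← Fin.sum_univ_eq_sum_range
    (fun i => (p i).eval _ * (p i).eval _), prod_univ_sum, Fintype.piFinset_univ, sum_mul, mul_sum]
  refine sum_congr rfl fun g _ => ?_
  rw [hshift]

theorem det_gramMatrix (B : Fin k → Set ℝ) (g : Fin k → Fin n) :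
    (gramMatrix w p B g).det
      = ∑ π : Perm (Fin k), ((Perm.sign π : ℤ) : ℝ) * ∏ a, gram w p (B a) (g a) (g (π⁻¹ a)) := by
  rw [det_apply']
  refine sum_congr rfl fun π _ => ?_
  rw [← Equiv.prod_comp π fun a => gram w p (B a) (g a) (g (π⁻¹ a))]
  simp [gramMatrix]

theorem det_gramMatrix_eq_zero (B : Fin k → Set ℝ) {g : Fin k → Fin n} (hg : ¬Injective g) :
    (gramMatrix w p B g).det = 0 := by
  obtain ⟨b₁, b₂, hg, hne⟩ : ∃ b₁ b₂, g b₁ = g b₂ ∧ b₁ ≠ b₂ := by simpa [Injective] using hg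
  exact det_zero_of_column_eq hne fun a => by simp [gramMatrix, hg]

theorem setIntegral_det_kernel (hw0 : ∀ x, 0 ≤ w x)
    (hmom : ∀ j : ℕ, Integrable (fun x => x ^ j * w x)) (B : Fin k → Set ℝ) :
    ∫ x in Set.univ.pi B, (of fun a b : Fin k =>
        (∑ i ∈ range n, (p i).eval (x a) * (p i).eval (x b)) * √(w (x a) * w (x b))).det
      = ∑ g : Fin k ↪ Fin n, (gramMatrix w p B g).det := by
  simp_rw [det_kernel_eq_sum hw0]
  rw [integral_finsetSum _ fun π _ => integrable_finsetSum _ fun g _ =>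
    (integrableOn_prod_eval_mul_eval_mul hmom B _ _).const_mul _]
  simp_rw [integral_finsetSum _ fun g _ =>
      (integrableOn_prod_eval_mul_eval_mul hmom B _ _).const_mul _,
    integral_const_mul, setIntegral_prod_eval_mul_eval_mul]
  rw [sum_comm, Fintype.sum_embedding_eq_sum_of_not_injective _ fun g => det_gramMatrix_eq_zero B]
  simp_rw [det_gramMatrix]

end OrthogonalEnsemble

open OrthogonalEnsemble

theorem stmt12_general (n : ℕ) (w : ℝ → ℝ) (hw0 : ∀ x, 0 ≤ w x) (hwm : Measurable w)
    (hmom : ∀ j : ℕ, Integrable (fun x => x ^ j * w x))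
    (p : ℕ → Polynomial ℝ) (hdeg : ∀ i, (p i).degree = (i : ℕ))
    (horth : ∀ i j, ∫ x, (p i).eval x * (p j).eval x * w x
        = if i = j then (1 : ℝ) else 0)
    (C : ℝ) (hC : 0 < C) (μ : Measure (Fin n → ℝ)) [IsProbabilityMeasure μ]
    (hμ : μ = volume.withDensity (fun l => ENNReal.ofReal
      (C * (∏ q ∈ Finset.univ.filter (fun q : Fin n × Fin n => q.1 < q.2),
          (l q.1 - l q.2)) ^ 2 * ∏ i, w (l i))))
    (k : ℕ) (B : Fin k → Set ℝ) (hBmeas : ∀ j, MeasurableSet (B j))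
    (hBdisj : Pairwise (Function.onFun Disjoint B)) :
    (∫ l, ∏ j : Fin k, (∑ i : Fin n, (B j).indicator (fun _ => (1 : ℝ)) (l i)) ∂μ)
      = ∫ x in Set.univ.pi B,
          Matrix.det (Matrix.of fun a b : Fin k =>
            (∑ i ∈ Finset.range n, (p i).eval (x a) * (p i).eval (x b))
              * Real.sqrt (w (x a) * w (x b))) := by
  set c : ℝ := (∏ j : Fin n, (p j).leadingCoeff)⁻¹ ^ 2
  have hρ : ∀ l : Fin n → ℝ, C * (∏ q ∈ univ.filter (fun q : Fin n × Fin n => q.1 < q.2),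
      (l q.1 - l q.2)) ^ 2 * ∏ i, w (l i) = C * c * density w p l := fun l => by
    rw [prod_sub_sq_eq_det_vandermonde_sq, det_vandermonde_eq_inv_prod_leadingCoeff_mul_det hdeg,
      density]
    ring
  have hexp : ∀ F : (Fin n → ℝ) → ℝ, ∫ l, F l ∂μ = C * c * ∫ l, density w p l * F l := by
    intro F
    rw [hμ, integral_withDensity_eq_integral_toReal_smul (by fun_prop)
      (ae_of_all _ fun _ => ENNReal.ofReal_lt_top), ← integral_const_mul]
    refine integral_congr_ae (ae_of_all _ fun l => ?_)
    dsimp only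
    rw [ENNReal.toReal_ofReal (mul_nonneg (mul_nonneg hC.le (sq_nonneg _))
      (prod_nonneg fun i _ => hw0 _)), hρ, smul_eq_mul, mul_assoc]
  have hnorm : C * c * n.factorial = 1 := by
    simpa [integral_density hmom horth] using (hexp fun _ => 1).symm
  rw [hexp, integral_density_mul_prod_count hmom horth B hBmeas hBdisj,
    setIntegral_det_kernel hw0 hmom, ← mul_assoc, hnorm, one_mul]

/-- an orthogonal polynomial ensemble with density proportional to
`Δ_n(λ)² ∏ w(λ_i)` is a determinantal point process with kernel
`K(x,y) = Σ_{i<n} p_i(x) p_i(y) √(w(x) w(y))`. -/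
theorem stmt12 (n : ℕ) (w : ℝ → ℝ) (hw0 : ∀ x, 0 ≤ w x) (hwm : Measurable w)
    (hwint : Integrable w) (hmom : ∀ j : ℕ, Integrable (fun x => x ^ j * w x))
    (p : ℕ → Polynomial ℝ) (hdeg : ∀ i, (p i).degree = (i : ℕ))
    (horth : ∀ i j, ∫ x, (p i).eval x * (p j).eval x * w x
        = if i = j then (1 : ℝ) else 0)
    (C : ℝ) (hC : 0 < C) (μ : Measure (Fin n → ℝ)) [IsProbabilityMeasure μ]
    (hμ : μ = volume.withDensity (fun l => ENNReal.ofReal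
      (C * (∏ q ∈ Finset.univ.filter (fun q : Fin n × Fin n => q.1 < q.2),
          (l q.1 - l q.2)) ^ 2 * ∏ i, w (l i))))
    (k : ℕ) (B : Fin k → Set ℝ) (hBmeas : ∀ j, MeasurableSet (B j))
    (hBdisj : Pairwise (Function.onFun Disjoint B)) :
    (∫ l, ∏ j : Fin k, (∑ i : Fin n, (B j).indicator (fun _ => (1 : ℝ)) (l i)) ∂μ)
      = ∫ x in Set.univ.pi B,
          Matrix.det (Matrix.of fun a b : Fin k =>
            (∑ i ∈ Finset.range n, (p i).eval (x a) * (p i).eval (x b))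
              * Real.sqrt (w (x a) * w (x b))) :=
  stmt12_general n w hw0 hwm hmom p hdeg horth C hC μ hμ k B hBmeas hBdisj
end

section
/- Minor interlacing (Cauchy/Rayleigh): if M is an n×n complex Hermitian matrix with ordered eigenvalues λ_1 ≥ ... ≥ λ_n, and β_1 ≥ ... ≥ β_{n−1} are the ordered eigenvalues of the principal (n−1)×(n−1) submatrix obtained by deleting the last row and column, then λ_i ≥ β_i ≥ λ_{i+1} for all i = 1,...,n−1. -/
/-!
Let `u₁, …, u_{n+1}` be orthonormal eigenvectors of `M` for `λ₁ ≥ ⋯ ≥ λ_{n+1}`, and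
`w₁, …, w_n` orthonormal eigenvectors of the minor `B` for `β₁ ≥ ⋯ ≥ β_n`, padded with a zero
last coordinate, so that `⟪M wᵢ, wⱼ⟫ = ⟪B wᵢ, wⱼ⟫`. Since `i + (n + 2 - i) > n + 1`, the spans of
`w₁, …, wᵢ` and of `uᵢ, …, u_{n+1}` share a nonzero vector `x`, and then
`βᵢ ‖x‖² ≤ ⟪M x, x⟫ ≤ λᵢ ‖x‖²`. Exchanging the roles of the two families, the spans of
`u₁, …, u_{i+1}` and `wᵢ, …, w_n` meet as well, which gives `λ_{i+1} ≤ βᵢ`.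
-/

open Polynomial Module
open scoped InnerProductSpace

namespace LinearMap

variable {𝕜 E ι : Type*} [RCLike 𝕜] [NormedAddCommGroup E] [InnerProductSpace 𝕜 E]
  [DecidableEq ι]

def IsDiagonalOn (T : E →ₗ[𝕜] E) (v : ι → E) (μ : ι → ℝ) : Prop :=
  ∀ i j, ⟪T (v i), v j⟫_𝕜 = if i = j then (μ i : 𝕜) else 0

variable {T : E →ₗ[𝕜] E} {v : ι → E} {μ : ι → ℝ}

theorem IsDiagonalOn.restrict (hT : T.IsDiagonalOn v μ) (s : Set ι) :
    T.IsDiagonalOn (fun i : s => v i) (fun i => μ i) :=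
  fun i j => (hT i j).trans (if_congr Subtype.ext_iff.symm rfl rfl)

theorem isDiagonalOn_of_apply_eq_smul (hv : Orthonormal 𝕜 v)
    (hT : ∀ i, T (v i) = (μ i : 𝕜) • v i) : T.IsDiagonalOn v μ := by
  intro i j
  rw [hT, inner_smul_left, RCLike.conj_ofReal, orthonormal_iff_ite.mp hv]
  split_ifs <;> simp

variable [Fintype ι]

theorem IsDiagonalOn.re_inner_sum_smul (hT : T.IsDiagonalOn v μ) (a : ι → 𝕜) :
    RCLike.re ⟪T (∑ i, a i • v i), ∑ i, a i • v i⟫_𝕜 = ∑ i, μ i * ‖a i‖ ^ 2 := by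
  unfold IsDiagonalOn at hT
  simp only [map_sum, map_smul, sum_inner, inner_sum, inner_smul_left, inner_smul_right, hT,
    mul_ite, mul_zero, Finset.sum_ite_eq', Finset.mem_univ, if_true]
  refine Finset.sum_congr rfl fun i _ => ?_
  rw [← mul_assoc, RCLike.mul_conj, ← RCLike.ofReal_pow, ← RCLike.ofReal_mul,
    RCLike.ofReal_re, mul_comm]

theorem IsDiagonalOn.mul_norm_sq_le_re_inner (hv : Orthonormal 𝕜 v) (hT : T.IsDiagonalOn v μ)
    {c : ℝ} (hc : ∀ i, c ≤ μ i) {x : E} (hx : x ∈ Submodule.span 𝕜 (Set.range v)) :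
    c * ‖x‖ ^ 2 ≤ RCLike.re ⟪T x, x⟫_𝕜 := by
  obtain ⟨a, rfl⟩ := (Submodule.mem_span_range_iff_exists_fun 𝕜).mp hx
  have hid : (LinearMap.id : E →ₗ[𝕜] E).IsDiagonalOn v 1 :=
    isDiagonalOn_of_apply_eq_smul hv fun i => by simp
  have hnorm : ‖∑ i, a i • v i‖ ^ 2 = ∑ i, ‖a i‖ ^ 2 := by
    simpa [inner_self_eq_norm_sq] using hid.re_inner_sum_smul a
  rw [hnorm, hT.re_inner_sum_smul, Finset.mul_sum]
  gcongr with i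
  exact hc i

theorem IsDiagonalOn.re_inner_le_mul_norm_sq (hv : Orthonormal 𝕜 v) (hT : T.IsDiagonalOn v μ)
    {c : ℝ} (hc : ∀ i, μ i ≤ c) {x : E} (hx : x ∈ Submodule.span 𝕜 (Set.range v)) :
    RCLike.re ⟪T x, x⟫_𝕜 ≤ c * ‖x‖ ^ 2 := by
  have hneg : (-T).IsDiagonalOn v (-μ) := fun i j => by
    rw [LinearMap.neg_apply, inner_neg_left, hT i j]
    split_ifs <;> simp
  have := hneg.mul_norm_sq_le_re_inner hv (c := -c) (fun i => neg_le_neg (hc i)) hx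
  simp only [LinearMap.neg_apply, inner_neg_left, map_neg, neg_mul] at this
  linarith

end LinearMap

theorem Submodule.exists_mem_inf_ne_zero_of_finrank_lt {K V : Type*} [DivisionRing K]
    [AddCommGroup V] [Module K V] [FiniteDimensional K V] {U W : Submodule K V}
    (h : finrank K V < finrank K U + finrank K W) : ∃ x ∈ U ⊓ W, x ≠ 0 := by
  refine Submodule.exists_mem_ne_zero_of_ne_bot fun hbot => ?_
  have := Submodule.finrank_sup_add_finrank_inf_eq U W
  have := Submodule.finrank_le (U ⊔ W)
  rw [hbot, finrank_bot] at *
  omega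

namespace LinearMap

variable {𝕜 E ι κ : Type*} [RCLike 𝕜] [NormedAddCommGroup E] [InnerProductSpace 𝕜 E]
  [FiniteDimensional 𝕜 E] [DecidableEq ι] [DecidableEq κ] {T : E →ₗ[𝕜] E}

theorem IsDiagonalOn.le_of_finrank_lt_card_add_card {u : ι → E} {v : κ → E} {μ : ι → ℝ}
    {ν : κ → ℝ} (hu : Orthonormal 𝕜 u) (hv : Orthonormal 𝕜 v) (hTu : T.IsDiagonalOn u μ)
    (hTv : T.IsDiagonalOn v ν) {s : Finset ι} {t : Finset κ}
    (hst : finrank 𝕜 E < s.card + t.card) {c d : ℝ} (hc : ∀ i ∈ s, c ≤ μ i)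
    (hd : ∀ j ∈ t, ν j ≤ d) : c ≤ d := by
  have hus : Orthonormal 𝕜 (fun i : s => u i) := hu.comp _ Subtype.val_injective
  have hvt : Orthonormal 𝕜 (fun j : t => v j) := hv.comp _ Subtype.val_injective
  obtain ⟨x, ⟨hxs, hxt⟩, hx0⟩ := Submodule.exists_mem_inf_ne_zero_of_finrank_lt (K := 𝕜)
    (U := Submodule.span 𝕜 (Set.range fun i : s => u i))
    (W := Submodule.span 𝕜 (Set.range fun j : t => v j)) (by
      rwa [finrank_span_eq_card hus.linearIndependent, finrank_span_eq_card hvt.linearIndependent,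
        Fintype.card_coe, Fintype.card_coe])
  have hlow := (hTu.restrict s).mul_norm_sq_le_re_inner hus (fun i => hc i i.2) hxs
  have hup := (hTv.restrict t).re_inner_le_mul_norm_sq hvt (fun j => hd j j.2) hxt
  exact le_of_mul_le_mul_right (hlow.trans hup) (pow_pos (norm_pos_iff.mpr hx0) 2)

theorem IsDiagonalOn.interlace {n : ℕ} (hE : finrank 𝕜 E ≤ n + 1) {u : Fin (n + 1) → E}
    {w : Fin n → E} {lam : Fin (n + 1) → ℝ} {beta : Fin n → ℝ} (hu : Orthonormal 𝕜 u)
    (hw : Orthonormal 𝕜 w) (hTu : T.IsDiagonalOn u lam) (hTw : T.IsDiagonalOn w beta)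
    (hlam : Antitone lam) (hbeta : Antitone beta) (i : Fin n) :
    lam i.succ ≤ beta i ∧ beta i ≤ lam i.castSucc := by
  constructor
  · refine hTu.le_of_finrank_lt_card_add_card hu hw hTw (s := Finset.Iic i.succ)
      (t := Finset.Ici i) ?_ (fun j hj => hlam (Finset.mem_Iic.mp hj))
      (fun j hj => hbeta (Finset.mem_Ici.mp hj))
    simp only [Fin.card_Iic, Fin.card_Ici, Fin.val_succ]
    omega
  · refine hTw.le_of_finrank_lt_card_add_card hw hu hTu (s := Finset.Iic i)
      (t := Finset.Ici i.castSucc) ?_ (fun j hj => hbeta (Finset.mem_Iic.mp hj))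
      (fun j hj => hlam (Finset.mem_Ici.mp hj))
    simp only [Fin.card_Iic, Fin.card_Ici, Fin.val_castSucc]
    omega

end LinearMap

theorem LinearMap.IsSymmetric.eigenvalues_eq_of_charpoly_eq {𝕜 E : Type*} [RCLike 𝕜]
    [NormedAddCommGroup E] [InnerProductSpace 𝕜 E] [FiniteDimensional 𝕜 E] {T : E →ₗ[𝕜] E}
    {n : ℕ} (hT : T.IsSymmetric) (hn : finrank 𝕜 E = n) {f : Fin n → ℝ} (hf : Antitone f)
    (h : T.charpoly = ∏ i, (X - C (f i : 𝕜))) : hT.eigenvalues hn = f := by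
  apply List.ofFn_injective
  rw [← hT.sort_roots_charpoly_eq_eigenvalues hn, h,
    roots_prod _ _ (Finset.prod_ne_zero_iff.mpr fun i _ => X_sub_C_ne_zero _)]
  simp_rw [roots_X_sub_C, Multiset.bind_singleton, Fin.univ_val_map, Multiset.map_coe,
    List.map_ofFn, Function.comp_def, RCLike.ofReal_re, Multiset.coe_sort]
  apply List.mergeSort_of_pairwise
  simp_rw [decide_eq_true_eq, ← List.sortedGE_iff_pairwise]
  exact hf.sortedGE_ofFn

theorem Matrix.IsHermitian.exists_orthonormal_toEuclideanLin_apply_eq_smul {𝕜 : Type*}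
    [RCLike 𝕜] {m : ℕ} {M : Matrix (Fin m) (Fin m) 𝕜} (hM : M.IsHermitian) {f : Fin m → ℝ}
    (hf : Antitone f) (h : M.charpoly = ∏ i, (X - C (f i : 𝕜))) :
    ∃ v : Fin m → EuclideanSpace 𝕜 (Fin m),
      Orthonormal 𝕜 v ∧ ∀ i, Matrix.toEuclideanLin M (v i) = (f i : 𝕜) • v i := by
  have hT := Matrix.isSymmetric_toEuclideanLin_iff.mpr hM
  have hn : finrank 𝕜 (EuclideanSpace 𝕜 (Fin m)) = m := finrank_euclideanSpace_fin
  have hf : hT.eigenvalues hn = f :=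
    hT.eigenvalues_eq_of_charpoly_eq hn hf (by simpa [Matrix.toLpLin_eq_toLin] using h)
  exact ⟨hT.eigenvectorBasis hn, (hT.eigenvectorBasis hn).orthonormal,
    fun i => hf ▸ hT.apply_eigenvectorBasis hn i⟩

namespace EuclideanSpace

variable {𝕜 : Type*} [RCLike 𝕜] {n : ℕ}

noncomputable def snocZero (y : EuclideanSpace 𝕜 (Fin n)) : EuclideanSpace 𝕜 (Fin (n + 1)) :=
  WithLp.toLp 2 (Fin.snoc (α := fun _ => 𝕜) y.ofLp 0)

theorem inner_snocZero_snocZero (y z : EuclideanSpace 𝕜 (Fin n)) :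
    ⟪snocZero y, snocZero z⟫_𝕜 = ⟪y, z⟫_𝕜 := by
  simp [snocZero, PiLp.inner_apply, Fin.sum_univ_castSucc]

theorem inner_toEuclideanLin_snocZero (M : Matrix (Fin (n + 1)) (Fin (n + 1)) 𝕜)
    (y z : EuclideanSpace 𝕜 (Fin n)) :
    ⟪Matrix.toEuclideanLin M (snocZero y), snocZero z⟫_𝕜 =
      ⟪Matrix.toEuclideanLin (M.submatrix Fin.castSucc Fin.castSucc) y, z⟫_𝕜 := by
  simp [snocZero, PiLp.inner_apply, Fin.sum_univ_castSucc, Matrix.mulVec, dotProduct]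

end EuclideanSpace

/-- Cauchy/Rayleigh interlacing for the eigenvalues of a Hermitian
matrix and of its principal `n × n` minor. -/
theorem stmt16 (n : ℕ) (M : Matrix (Fin (n + 1)) (Fin (n + 1)) ℂ) (hM : M.IsHermitian)
    (lam : Fin (n + 1) → ℝ) (beta : Fin n → ℝ)
    (hlam₁ : Antitone lam)
    (hlam₂ : M.charpoly = ∏ i : Fin (n + 1), (X - C ((lam i : ℝ) : ℂ)))
    (hbeta₁ : Antitone beta)
    (hbeta₂ : (M.submatrix Fin.castSucc Fin.castSucc).charpoly
        = ∏ i : Fin n, (X - C ((beta i : ℝ) : ℂ))) :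
    ∀ i : Fin n, lam i.succ ≤ beta i ∧ beta i ≤ lam i.castSucc := by
  obtain ⟨u, hu, hMu⟩ := hM.exists_orthonormal_toEuclideanLin_apply_eq_smul hlam₁ hlam₂
  obtain ⟨w, hw, hBw⟩ :=
    (hM.submatrix Fin.castSucc).exists_orthonormal_toEuclideanLin_apply_eq_smul hbeta₁ hbeta₂
  have hw' : Orthonormal ℂ (fun i => EuclideanSpace.snocZero (w i)) :=
    orthonormal_iff_ite.mpr fun i j => by
      rw [EuclideanSpace.inner_snocZero_snocZero, orthonormal_iff_ite.mp hw]
  have hMw : (Matrix.toEuclideanLin M).IsDiagonalOn (fun i => EuclideanSpace.snocZero (w i)) beta :=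
    fun i j => by
      rw [EuclideanSpace.inner_toEuclideanLin_snocZero]
      exact LinearMap.isDiagonalOn_of_apply_eq_smul hw hBw i j
  exact (LinearMap.isDiagonalOn_of_apply_eq_smul hu hMu).interlace
    (finrank_euclideanSpace_fin (𝕜 := ℂ)).le hu hw' hMw hlam₁ hbeta₁
end
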